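/- arXiv:2605.11535 — 8 statements merged into one kernel-verified Lean document; each statement's English description precedes it below -/
import Mathlib

section
/- Let λ > 0 and let Λ, Λ' be d×d symmetric positive definite matrices with Λ ⪰ λI and Λ' ⪰ λI. Then the operator norm of the difference of their positive square roots satisfies ||Λ^{1/2} - (Λ')^{1/2}||_2 ≤ (1/(2√λ)) ||Λ - Λ'||_2. -/
/-!
Write `A = Λ^{1/2}`, `B = Λ'^{1/2}` and `D = A - B`, so that `Λ - Λ' = A D + D B`. Since `D` is
self-adjoint, it has a unit eigenvector `v` whose eigenvalue `μ` satisfies `|μ| = ‖D‖`, and then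
`⟪v, (Λ - Λ') v⟫ = μ (⟪v, A v⟫ + ⟪v, B v⟫)`. The spectra of `Λ, Λ'` lie in `[λ, ∞)`, so `A, B ⪰ √λ`
and the right-hand side has absolute value at least `2 √λ ‖D‖`; the left-hand side is at most
`‖Λ - Λ'‖`.
-/

open Matrix
open scoped MatrixOrder InnerProductSpace
open RCLike

section Operator

variable {𝕜 E : Type*} [RCLike 𝕜] [NormedAddCommGroup E] [InnerProductSpace 𝕜 E]
  [FiniteDimensional 𝕜 E]

theorem LinearMap.IsSymmetric.exists_eigenvector_abs_eq_norm [Nontrivial E] {T : E →L[𝕜] E}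
    (hT : (T : E →ₗ[𝕜] E).IsSymmetric) :
    ∃ (v : E) (μ : ℝ), ‖v‖ = 1 ∧ T v = (μ : 𝕜) • v ∧ |μ| = ‖T‖ := by
  have := FiniteDimensional.complete 𝕜 E
  have hne : (spectrum 𝕜 T).Nonempty := by
    rw [ContinuousLinearMap.spectrum_eq]
    exact ⟨_, hT.hasEigenvalue_iSup_of_finiteDimensional.mem_spectrum⟩
  obtain ⟨k, hk, hnorm⟩ := spectrum.exists_nnnorm_eq_spectralRadius_of_nonempty hne
  rw [T.spectralRadius_eq_nnnorm (ContinuousLinearMap.isSelfAdjoint_iff_isSymmetric.mpr hT)]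
    at hnorm
  rw [ContinuousLinearMap.spectrum_eq, ← Module.End.hasEigenvalue_iff_mem_spectrum] at hk
  obtain ⟨w, hw⟩ := hk.exists_hasEigenvector
  have hreal : (re k : 𝕜) = k := conj_eq_iff_re.mp (hT.conj_eigenvalue_eq_self hk)
  refine ⟨(‖w‖⁻¹ : 𝕜) • w, re k, norm_smul_inv_norm hw.2, ?_, ?_⟩
  · rw [map_smul, ← ContinuousLinearMap.coe_coe, hw.apply_eq_smul, hreal, smul_comm]
  · rw [← norm_ofReal (K := 𝕜), hreal]
    exact congrArg NNReal.toReal (mod_cast hnorm : ‖k‖₊ = ‖T‖₊)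

theorem ContinuousLinearMap.two_mul_mul_norm_sub_le_norm_mul_self_sub {A B : E →L[𝕜] E} {m : ℝ}
    (hA : ∀ x, m * ‖x‖ ^ 2 ≤ re ⟪x, A x⟫_𝕜) (hB : ∀ x, m * ‖x‖ ^ 2 ≤ re ⟪x, B x⟫_𝕜)
    (hAB : ((A - B : E →L[𝕜] E) : E →ₗ[𝕜] E).IsSymmetric) :
    2 * m * ‖A - B‖ ≤ ‖A * A - B * B‖ := by
  cases subsingleton_or_nontrivial E
  · simp [opNorm_subsingleton]
  obtain ⟨v, μ, hv, hμv, hμ⟩ := hAB.exists_eigenvector_abs_eq_norm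
  set s := ⟪v, A v⟫_𝕜 + ⟪v, B v⟫_𝕜
  have hquad : ⟪v, (A * A - B * B) v⟫_𝕜 = μ * s := by
    have hsymm := hAB v (B v)
    simp only [coe_coe] at hsymm hμv
    rw [show A * A - B * B = A * (A - B) + (A - B) * B by noncomm_ring, _root_.add_apply,
      inner_add_right, mul_apply_eq_comp, mul_apply_eq_comp, hμv, map_smul, inner_smul_right,
      ← hsymm, hμv, inner_smul_left, conj_ofReal, mul_add]
  have hs : 2 * m ≤ ‖s‖ := by
    have hsum := add_le_add (hA v) (hB v)
    rw [hv] at hsum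
    calc 2 * m ≤ re s := by simp only [s, map_add]; linarith
      _ ≤ ‖s‖ := re_le_norm s
  calc 2 * m * ‖A - B‖ = |μ| * (2 * m) := by rw [hμ, mul_comm]
    _ ≤ |μ| * ‖s‖ := mul_le_mul_of_nonneg_left hs (abs_nonneg μ)
    _ = ‖⟪v, (A * A - B * B) v⟫_𝕜‖ := by rw [hquad, norm_mul, norm_ofReal]
    _ ≤ ‖v‖ * ‖(A * A - B * B) v‖ := norm_inner_le_norm _ _
    _ ≤ ‖A * A - B * B‖ := by simpa [hv] using (A * A - B * B).le_opNorm v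

end Operator

section Sqrt

variable {A : Type*} [PartialOrder A] [Ring A] [StarRing A] [TopologicalSpace A]
  [StarOrderedRing A] [Algebra ℝ A] [ContinuousFunctionalCalculus ℝ A IsSelfAdjoint]
  [NonnegSpectrumClass ℝ A] [IsSemitopologicalRing A] [T2Space A]

theorem CFC.algebraMap_sqrt_le_sqrt {r : ℝ} {a : A} (hra : algebraMap ℝ A r ≤ a) (ha : 0 ≤ a) :
    algebraMap ℝ A √r ≤ CFC.sqrt a := by
  rw [CFC.sqrt_eq_real_sqrt a ha, cfcₙ_eq_cfc, algebraMap_le_cfc_iff _ _ _ (ha := ha.isSelfAdjoint)]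
  rw [algebraMap_le_iff_le_spectrum (IsSelfAdjoint.of_nonneg ha)] at hra
  exact fun x hx ↦ Real.sqrt_le_sqrt (hra x hx)

end Sqrt

theorem Matrix.mul_norm_sq_le_re_inner_toEuclideanCLM {𝕜 n : Type*} [RCLike 𝕜] [Fintype n]
    [DecidableEq n] {M : Matrix n n 𝕜} {c : ℝ} (h : algebraMap ℝ _ c ≤ M)
    (x : EuclideanSpace 𝕜 n) :
    c * ‖x‖ ^ 2 ≤ re ⟪x, toEuclideanCLM (𝕜 := 𝕜) M x⟫_𝕜 := by
  have hpos : (toEuclideanCLM (𝕜 := 𝕜) (M - algebraMap ℝ _ c)).IsPositive := by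
    rw [← ContinuousLinearMap.isPositive_toLinearMap_iff, coe_toEuclideanCLM_eq_toEuclideanLin,
      isPositive_toEuclideanLin_iff]
    exact Matrix.le_iff.mp h
  have hc := hpos.re_inner_nonneg_right x
  rw [map_sub, _root_.sub_apply, inner_sub_right, map_sub, sub_nonneg] at hc
  convert hc using 1
  rw [IsScalarTower.algebraMap_apply ℝ 𝕜, AlgHomClass.commutes,
    ContinuousLinearMap.algebraMap_apply, inner_smul_right, inner_self_eq_norm_sq_to_K]
  norm_cast

theorem sqrt_diff_opNorm_le (d : ℕ) (lam : ℝ) (hlam : 0 < lam)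
    (Λ Λ' : Matrix (Fin d) (Fin d) ℝ)
    (hΛ : Λ.PosDef) (hΛ' : Λ'.PosDef)
    (hΛlam : (Λ - lam • (1 : Matrix (Fin d) (Fin d) ℝ)).PosSemidef)
    (hΛ'lam : (Λ' - lam • (1 : Matrix (Fin d) (Fin d) ℝ)).PosSemidef) :
    ‖Matrix.toEuclideanCLM (𝕜 := ℝ) (CFC.sqrt Λ - CFC.sqrt Λ')‖ ≤
      (1 / (2 * Real.sqrt lam)) * ‖Matrix.toEuclideanCLM (𝕜 := ℝ) (Λ - Λ')‖ := by
  have hΛ0 : 0 ≤ Λ := nonneg_iff_posSemidef.mpr hΛ.posSemidef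
  have hΛ'0 : 0 ≤ Λ' := nonneg_iff_posSemidef.mpr hΛ'.posSemidef
  have hA := mul_norm_sq_le_re_inner_toEuclideanCLM <| CFC.algebraMap_sqrt_le_sqrt
    (by rwa [le_iff, Algebra.algebraMap_eq_smul_one]) hΛ0
  have hB := mul_norm_sq_le_re_inner_toEuclideanCLM <| CFC.algebraMap_sqrt_le_sqrt
    (by rwa [le_iff, Algebra.algebraMap_eq_smul_one]) hΛ'0
  have hAB : IsSelfAdjoint (toEuclideanCLM (𝕜 := ℝ) (CFC.sqrt Λ - CFC.sqrt Λ')) :=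
    ((CFC.sqrt_nonneg Λ).isSelfAdjoint.sub (CFC.sqrt_nonneg Λ').isSelfAdjoint).map _
  have key := ContinuousLinearMap.two_mul_mul_norm_sub_le_norm_mul_self_sub hA hB
    (by rw [← map_sub]; exact hAB.isSymmetric)
  rw [← map_sub, ← map_mul, ← map_mul, CFC.sqrt_mul_sqrt_self Λ, CFC.sqrt_mul_sqrt_self Λ',
    ← map_sub] at key
  rw [one_div, inv_mul_eq_div, le_div_iff₀ (by positivity), mul_comm]
  exact key
end

section
/- Let A, B, C be positive semidefinite d×d matrices with A = B + C and B positive definite. Then for every nonzero vector x, (xᵀAx)/(xᵀBx) ≤ det(A)/det(B). -/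
/-!
Let `S = √B` and `M = S⁻¹ A S⁻¹`. Since `A - B = C ≥ 0`, congruence gives `M ≥ 1`, so every
eigenvalue of `M` is at least `1` and hence at most their product `det M = det A / det B`.
Thus `M ≤ (det M) • 1`, and conjugating back by `S` gives `A ≤ (det A / det B) • B` in the
Loewner order; evaluating this at `x` is the claim.
-/

open Matrix

theorem Finset.single_le_prod_of_one_le {ι R : Type*} [CommSemiring R] [PartialOrder R]
    [IsOrderedRing R] {s : Finset ι} {f : ι → R} (hf : ∀ j ∈ s, 1 ≤ f j) {i : ι} (hi : i ∈ s) :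
    f i ≤ ∏ j ∈ s, f j := by
  classical
  rw [← Finset.mul_prod_erase s f hi]
  exact le_mul_of_one_le_right (zero_le_one.trans (hf i hi))
    (Finset.one_le_prod fun j hj ↦ hf j (Finset.mem_of_mem_erase hj))

namespace Matrix

open scoped MatrixOrder

variable {n : Type*} [Fintype n]

theorem dotProduct_mulVec_le_of_le {A B : Matrix n n ℝ} (hAB : A ≤ B) (x : n → ℝ) :
    x ⬝ᵥ A *ᵥ x ≤ x ⬝ᵥ B *ᵥ x := by
  have h := (le_iff.mp hAB).dotProduct_mulVec_nonneg x
  rwa [star_trivial, sub_mulVec, dotProduct_sub, sub_nonneg] at h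

variable [DecidableEq n]

theorem le_det_smul_one_of_one_le {M : Matrix n n ℝ} (hM : 1 ≤ M) : M ≤ M.det • 1 := by
  have hMsa : IsSelfAdjoint M := (IsSelfAdjoint.one _).of_ge hM
  have hM_herm : M.IsHermitian := hMsa
  have one_le_eigenvalues : ∀ i, 1 ≤ hM_herm.eigenvalues i := fun i ↦
    (algebraMap_le_iff_le_spectrum hMsa).mp (by simpa using hM) _
      (hM_herm.eigenvalues_mem_spectrum_real i)
  rw [← Algebra.algebraMap_eq_smul_one, le_algebraMap_iff_spectrum_le hMsa]
  intro x hx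
  obtain ⟨i, rfl⟩ := hM_herm.spectrum_real_eq_range_eigenvalues ▸ hx
  simpa [hM_herm.det_eq_prod_eigenvalues] using
    Finset.single_le_prod_of_one_le (fun j _ ↦ one_le_eigenvalues j) (Finset.mem_univ i)

theorem le_det_div_det_smul_of_le {A B : Matrix n n ℝ} (hB : B.PosDef) (hBA : B ≤ A) :
    A ≤ (A.det / B.det) • B := by
  set S := CFC.sqrt B
  have hS : IsSelfAdjoint S := .of_nonneg (CFC.sqrt_nonneg B)
  have hSS : S * S = B := CFC.sqrt_mul_sqrt_self B hB.posSemidef.nonneg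
  have hS_unit : IsUnit S.det := by
    rw [← isUnit_iff_isUnit_det, CFC.isUnit_sqrt_iff B hB.posSemidef.nonneg]
    exact hB.isUnit
  set M := S⁻¹ * A * S⁻¹
  have one_le_M : 1 ≤ M :=
    calc (1 : Matrix n n ℝ) = S⁻¹ * B * S⁻¹ := by
          rw [← hSS, Matrix.mul_assoc, mul_nonsing_inv_cancel_right _ _ hS_unit,
            nonsing_inv_mul _ hS_unit]
      _ ≤ M := IsSelfAdjoint.conjugate_le_conjugate hBA (IsHermitian.inv hS)
  have hSMS : S * M * S = A := by
    rw [Matrix.mul_assoc, Matrix.mul_assoc, nonsing_inv_mul _ hS_unit, Matrix.mul_one,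
      ← Matrix.mul_assoc, mul_nonsing_inv _ hS_unit, Matrix.one_mul]
  have hdet : M.det = A.det / B.det := by
    rw [eq_div_iff hB.det_pos.ne', ← hSMS, ← hSS]
    simp only [det_mul]
    ring
  calc A = S * M * S := hSMS.symm
    _ ≤ S * (M.det • 1) * S := hS.conjugate_le_conjugate (le_det_smul_one_of_one_le one_le_M)
    _ = (A.det / B.det) • B := by
      rw [hdet, Matrix.mul_smul, Matrix.mul_one, Matrix.smul_mul, hSS]

end Matrix

theorem quad_form_ratio_le_det_ratio_general (d : ℕ)
    (A B C : Matrix (Fin d) (Fin d) ℝ)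
    (hB : B.PosDef) (hC : C.PosSemidef)
    (hABC : A = B + C) :
    ∀ x : Fin d → ℝ, x ≠ 0 →
      (x ⬝ᵥ A *ᵥ x) / (x ⬝ᵥ B *ᵥ x) ≤ A.det / B.det := by
  intro x hx
  open scoped MatrixOrder in
  have hBA : B ≤ A := by rwa [le_iff, hABC, add_sub_cancel_left]
  have hxBx : 0 < x ⬝ᵥ B *ᵥ x := by simpa using hB.dotProduct_mulVec_pos hx
  rw [div_le_iff₀ hxBx]
  simpa [smul_mulVec, dotProduct_smul] using
    dotProduct_mulVec_le_of_le (le_det_div_det_smul_of_le hB hBA) x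

theorem quad_form_ratio_le_det_ratio (d : ℕ)
    (A B C : Matrix (Fin d) (Fin d) ℝ)
    (hA : A.PosSemidef) (hB : B.PosDef) (hC : C.PosSemidef)
    (hABC : A = B + C) :
    ∀ x : Fin d → ℝ, x ≠ 0 →
      (x ⬝ᵥ A *ᵥ x) / (x ⬝ᵥ B *ᵥ x) ≤ A.det / B.det :=
  quad_form_ratio_le_det_ratio_general d A B C hB hC hABC
end

section
/- Let Q₁, Q₂ : A → R be functions on a finite set A and α > 0. Define softmax policies π₁(a) = exp(αQ₁(a))/Σ_b exp(αQ₁(b)) and π₂(a) = exp(αQ₂(a))/Σ_b exp(αQ₂(b)). Then ||π₁ - π₂||_1 ≤ 8α ||Q₁ - Q₂||_∞. -/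
open Real Finset

theorem softmax_lipschitz (A : Type*) [Fintype A] [Nonempty A]
    (Q₁ Q₂ : A → ℝ) (α : ℝ) (hα : 0 < α) :
    ∑ a, |Real.exp (α * Q₁ a) / (∑ b, Real.exp (α * Q₁ b))
          - Real.exp (α * Q₂ a) / (∑ b, Real.exp (α * Q₂ b))| ≤
      8 * α * (Finset.univ.sup' Finset.univ_nonempty (fun a => |Q₁ a - Q₂ a|)) := by
  set ε := Finset.univ.sup' Finset.univ_nonempty (fun a => |Q₁ a - Q₂ a|) with hεdef
  have habs : ∀ a : A, |Q₁ a - Q₂ a| ≤ ε := fun a => Finset.le_sup' (fun b => |Q₁ b - Q₂ b|) (Finset.mem_univ a)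
  have hεnn : 0 ≤ ε := le_trans (abs_nonneg _) (habs (Classical.arbitrary A))
  set S₁ := ∑ b, Real.exp (α * Q₁ b) with hS₁def
  set S₂ := ∑ b, Real.exp (α * Q₂ b) with hS₂def
  have hS₁ : 0 < S₁ := Finset.sum_pos (fun b _ => Real.exp_pos _) Finset.univ_nonempty
  have hS₂ : 0 < S₂ := Finset.sum_pos (fun b _ => Real.exp_pos _) Finset.univ_nonempty
  set E := Real.exp (α * ε) with hEdef
  have hE1 : 1 ≤ E := by
    rw [hEdef, ← Real.exp_zero]
    exact Real.exp_le_exp.2 (by positivity)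
  have h12 : ∀ a : A, Real.exp (α * Q₁ a) ≤ E * Real.exp (α * Q₂ a) := by
    intro a
    rw [hEdef, ← Real.exp_add]
    apply Real.exp_le_exp.2
    have h := abs_le.1 (habs a)
    nlinarith [h.1, h.2]
  have h21 : ∀ a : A, Real.exp (α * Q₂ a) ≤ E * Real.exp (α * Q₁ a) := by
    intro a
    rw [hEdef, ← Real.exp_add]
    apply Real.exp_le_exp.2
    have h := abs_le.1 (habs a)
    nlinarith [h.1, h.2]
  have hS12 : S₁ ≤ E * S₂ := by
    rw [hS₁def, hS₂def, Finset.mul_sum]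
    exact Finset.sum_le_sum (fun b _ => h12 b)
  have hS21 : S₂ ≤ E * S₁ := by
    rw [hS₂def, hS₁def, Finset.mul_sum]
    exact Finset.sum_le_sum (fun b _ => h21 b)
  -- pointwise bound
  have key : ∀ a : A, |Real.exp (α * Q₁ a) / S₁ - Real.exp (α * Q₂ a) / S₂|
      ≤ (E ^ 2 - 1) * (Real.exp (α * Q₂ a) / S₂) := by
    intro a
    have hp1 : 0 < Real.exp (α * Q₁ a) := Real.exp_pos _
    have hp2 : 0 < Real.exp (α * Q₂ a) := Real.exp_pos _
    have hub : Real.exp (α * Q₁ a) / S₁ ≤ E ^ 2 * Real.exp (α * Q₂ a) / S₂ := by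
      rw [div_le_div_iff₀ hS₁ hS₂]
      nlinarith [h12 a, hS21, hp1.le, hp2.le, hS₁.le, hS₂.le, hE1]
    have hlb : Real.exp (α * Q₂ a) / S₂ ≤ E ^ 2 * Real.exp (α * Q₁ a) / S₁ := by
      rw [div_le_div_iff₀ hS₂ hS₁]
      nlinarith [h21 a, hS12, hp1.le, hp2.le, hS₁.le, hS₂.le, hE1]
    rw [mul_div_assoc] at hub hlb
    have hq1 : 0 ≤ Real.exp (α * Q₁ a) / S₁ := by positivity
    have hq2 : 0 ≤ Real.exp (α * Q₂ a) / S₂ := by positivity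
    rw [abs_le]
    constructor
    · nlinarith [sq_nonneg (E - 1), sq_nonneg (E + 1), sq_nonneg (E ^ 2 - 1),
        mul_nonneg (mul_nonneg hq2 (sq_nonneg (E ^ 2 - 1))) hq2]
    · nlinarith
  have hsum2 : ∑ a, Real.exp (α * Q₂ a) / S₂ = 1 := by
    rw [← Finset.sum_div, ← hS₂def, div_self hS₂.ne']
  have hsum1 : ∑ a, Real.exp (α * Q₁ a) / S₁ = 1 := by
    rw [← Finset.sum_div, ← hS₁def, div_self hS₁.ne']
  have hmain : ∑ a, |Real.exp (α * Q₁ a) / S₁ - Real.exp (α * Q₂ a) / S₂| ≤ E ^ 2 - 1 := by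
    calc ∑ a, |Real.exp (α * Q₁ a) / S₁ - Real.exp (α * Q₂ a) / S₂|
        ≤ ∑ a, (E ^ 2 - 1) * (Real.exp (α * Q₂ a) / S₂) :=
          Finset.sum_le_sum (fun a _ => key a)
      _ = E ^ 2 - 1 := by rw [← Finset.mul_sum, hsum2, mul_one]
  have htriv : ∑ a, |Real.exp (α * Q₁ a) / S₁ - Real.exp (α * Q₂ a) / S₂| ≤ 2 := by
    calc ∑ a, |Real.exp (α * Q₁ a) / S₁ - Real.exp (α * Q₂ a) / S₂|
        ≤ ∑ a, (Real.exp (α * Q₁ a) / S₁ + Real.exp (α * Q₂ a) / S₂) := by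
          apply Finset.sum_le_sum
          intro a _
          have : 0 ≤ Real.exp (α * Q₂ a) / S₂ := by positivity
          have : 0 ≤ Real.exp (α * Q₁ a) / S₁ := by positivity
          rw [abs_le]; constructor <;> linarith
      _ = 2 := by rw [Finset.sum_add_distrib, hsum1, hsum2]; norm_num
  -- final case split on x := 2 * α * ε
  rcases le_or_gt (2 * α * ε) (1 / 2) with hx | hx
  · -- E^2 - 1 ≤ 2αε * E^2 ≤ 2αε * 3 ≤ 8αε
    have hE2 : E ^ 2 = Real.exp (2 * α * ε) := by
      rw [hEdef, ← Real.exp_nat_mul]; ring_nf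
    have h1 : 1 - 2 * α * ε ≤ Real.exp (-(2 * α * ε)) := by
      have := Real.add_one_le_exp (-(2 * α * ε)); linarith
    have h2 : Real.exp (-(2 * α * ε)) * E ^ 2 = 1 := by
      rw [hE2, ← Real.exp_add]; simp
    have h3 : E ^ 2 ≤ 3 := by
      rw [hE2]
      calc Real.exp (2 * α * ε) ≤ Real.exp 1 := Real.exp_le_exp.2 (by linarith)
        _ ≤ 3 := by linarith [Real.exp_one_lt_d9]
    have h4 : E ^ 2 - 1 ≤ 2 * α * ε * E ^ 2 := by nlinarith [sq_nonneg E]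
    have h5 : 2 * α * ε * E ^ 2 ≤ 8 * α * ε := by
      have hx0 : 0 ≤ 2 * α * ε := by positivity
      nlinarith
    linarith
  · have : 2 ≤ 8 * α * ε := by linarith
    linarith
end

section
/- Let f be a convex function on the probability simplex Δ over a finite set, α > 0, and y a point in the interior of Δ. Suppose x* minimizes x ↦ f(x) + (1/α) D(x||y) over Δ and x* lies in the interior of Δ. Then for every z ∈ Δ: f(x*) + (1/α)D(x*||y) ≤ f(z) + (1/α)D(z||y) - (1/α)D(z||x*). -/
open Finset Real

/-!
Along the segment `x_t = x* + t (z - x*)`, `t ∈ [0, 1]`, convexity of `f` bounds the objective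
`f x_t + D(x_t‖y) / α` from above by `(1 - t) f x* + t f z + D(x_t‖y) / α`, a function of `t`
that is differentiable and minimised at `t = 0`. Its derivative there is therefore nonnegative,
which gives `f x* - f z ≤ ∑ₐ (z a - x* a) log (x* a / y a) / α`. The three-point identity
`D(z‖y) - D(z‖x*) = ∑ₐ z a log (x* a / y a)` turns this into the claim.
-/

theorem IsLocalMinOn.hasDerivAt_nonneg_of_Icc {φ : ℝ → ℝ} {a b L : ℝ} (hab : a < b)
    (hmin : IsLocalMinOn φ (Set.Icc a b) a) (hφ : HasDerivAt φ L a) : 0 ≤ L := by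
  have hcone : b - a ∈ posTangentConeAt (Set.Icc a b) a :=
    sub_mem_posTangentConeAt_of_segment_subset (segment_eq_Icc hab.le).subset
  have := hmin.hasFDerivWithinAt_nonneg (hasDerivAt_iff_hasFDerivAt.1 hφ).hasFDerivWithinAt hcone
  simp only [ContinuousLinearMap.toSpanSingleton_apply, smul_eq_mul] at this
  exact nonneg_of_mul_nonneg_right this (sub_pos.2 hab)

theorem ConvexOn.sub_le_of_isMinOn_add {E : Type*} [AddCommGroup E] [Module ℝ E] {s : Set E}
    {f h : E → ℝ} (hf : ConvexOn ℝ s f) {x z : E} (hx : x ∈ s) (hz : z ∈ s)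
    (hmin : IsMinOn (f + h) s x) {L : ℝ}
    (hL : HasDerivAt (fun t : ℝ => h (x + t • (z - x))) L 0) : f x - f z ≤ L := by
  set φ : ℝ → ℝ := fun t => (1 - t) * f x + t * f z + h (x + t • (z - x))
  have hφ : HasDerivAt φ (f z - f x + L) 0 :=
    ((((hasDerivAt_id (0 : ℝ)).const_sub 1).mul_const (f x)).add
      ((hasDerivAt_id (0 : ℝ)).mul_const (f z)) |>.add hL).congr_deriv (by ring)
  have hφmin : IsMinOn φ (Set.Icc 0 1) 0 := by
    intro t ⟨ht0, ht1⟩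
    have hseg : x + t • (z - x) = (1 - t) • x + t • z := by
      rw [smul_sub, sub_smul, one_smul]; abel
    have hmem : x + t • (z - x) ∈ s := by
      rw [hseg]; exact hf.1 hx hz (by linarith) ht0 (by ring)
    have hconv : f (x + t • (z - x)) ≤ (1 - t) * f x + t * f z := by
      rw [hseg]; exact hf.2 hx hz (by linarith) ht0 (by ring)
    have hle := isMinOn_iff.1 hmin _ hmem
    simp only [Pi.add_apply] at hle
    change φ 0 ≤ φ t
    simp only [φ, zero_smul, add_zero]
    linarith
  linarith [hφmin.localize.hasDerivAt_nonneg_of_Icc zero_lt_one hφ]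

theorem hasDerivAt_mul_log_div {b u : ℝ} (hb : b ≠ 0) (hu : u ≠ 0) :
    HasDerivAt (fun u => u * log (u / b)) (log (u / b) + 1) u :=
  ((hasDerivAt_id u).mul (((hasDerivAt_id u).div_const b).log (div_ne_zero hu hb))).congr_deriv
    (by simp only [id]; field_simp)

noncomputable def relEntropy {A : Type*} [Fintype A] (p q : A → ℝ) : ℝ :=
  ∑ a, p a * log (p a / q a)

section relEntropy

variable {A : Type*} [Fintype A]

theorem hasDerivAt_relEntropy_add_smul {p q : A → ℝ} (v : A → ℝ) (hp : ∀ a, p a ≠ 0)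
    (hq : ∀ a, q a ≠ 0) :
    HasDerivAt (fun t : ℝ => relEntropy (p + t • v) q) (∑ a, v a * (log (p a / q a) + 1)) 0 := by
  refine HasDerivAt.fun_sum fun a _ => ?_
  have hline : HasDerivAt (fun t : ℝ => p a + t * v a) (v a) 0 := by
    simpa using ((hasDerivAt_id (0 : ℝ)).mul_const (v a)).const_add (p a)
  have := (hasDerivAt_mul_log_div (hq a) (by simpa using hp a)).comp 0 hline
  simpa [mul_comm, Function.comp_def] using this

theorem relEntropy_sub_relEntropy (p : A → ℝ) {q r : A → ℝ} (hq : ∀ a, q a ≠ 0)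
    (hr : ∀ a, r a ≠ 0) :
    relEntropy p q - relEntropy p r = ∑ a, p a * log (r a / q a) := by
  rw [relEntropy, relEntropy, ← sum_sub_distrib]
  refine sum_congr rfl fun a _ => ?_
  rcases eq_or_ne (p a) 0 with h | h
  · simp [h]
  · rw [log_div h (hq a), log_div h (hr a), log_div (hr a) (hq a)]
    ring

end relEntropy

theorem pushback_lemma_general (A : Type*) [Fintype A]
    (f : (A → ℝ) → ℝ)
    (hf : ConvexOn ℝ {p : A → ℝ | (∀ a, 0 ≤ p a) ∧ ∑ a, p a = 1} f)
    (α : ℝ)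
    (y : A → ℝ) (hy : ∀ a, 0 < y a)
    (xstar : A → ℝ) (hxpos : ∀ a, 0 < xstar a) (hxsum : ∑ a, xstar a = 1)
    (hmin : ∀ z : A → ℝ, (∀ a, 0 ≤ z a) → ∑ a, z a = 1 →
      f xstar + (1 / α) * ∑ a, xstar a * Real.log (xstar a / y a) ≤
        f z + (1 / α) * ∑ a, z a * Real.log (z a / y a)) :
    ∀ z : A → ℝ, (∀ a, 0 ≤ z a) → ∑ a, z a = 1 →
      f xstar + (1 / α) * ∑ a, xstar a * Real.log (xstar a / y a) ≤
        f z + (1 / α) * ∑ a, z a * Real.log (z a / y a)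
          - (1 / α) * ∑ a, z a * Real.log (z a / xstar a) := by
  intro z hz hzsum
  have hx0 : ∀ a, xstar a ≠ 0 := fun a => (hxpos a).ne'
  have hy0 : ∀ a, y a ≠ 0 := fun a => (hy a).ne'
  have hfirst := hf.sub_le_of_isMinOn_add (h := fun p => 1 / α * relEntropy p y)
    ⟨fun a => (hxpos a).le, hxsum⟩ ⟨hz, hzsum⟩ (isMinOn_iff.2 fun w hw => hmin w hw.1 hw.2)
    ((hasDerivAt_relEntropy_add_smul (z - xstar) hx0 hy0).const_mul (1 / α))
  have hslope : ∑ a, (z - xstar) a * (log (xstar a / y a) + 1)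
      = ∑ a, z a * log (xstar a / y a) - relEntropy xstar y := by
    simp only [Pi.sub_apply, sub_mul, mul_add, mul_one, sum_sub_distrib, sum_add_distrib,
      hzsum, hxsum, relEntropy]
    ring
  rw [hslope] at hfirst
  have hthree := relEntropy_sub_relEntropy z hy0 hx0
  change f xstar + 1 / α * relEntropy xstar y
    ≤ f z + 1 / α * relEntropy z y - 1 / α * relEntropy z xstar
  linear_combination hfirst - 1 / α * hthree

theorem pushback_lemma (A : Type*) [Fintype A] [Nonempty A]
    (f : (A → ℝ) → ℝ)
    (hf : ConvexOn ℝ {p : A → ℝ | (∀ a, 0 ≤ p a) ∧ ∑ a, p a = 1} f)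
    (α : ℝ) (hα : 0 < α)
    (y : A → ℝ) (hy : ∀ a, 0 < y a) (hysum : ∑ a, y a = 1)
    (xstar : A → ℝ) (hxpos : ∀ a, 0 < xstar a) (hxsum : ∑ a, xstar a = 1)
    (hmin : ∀ z : A → ℝ, (∀ a, 0 ≤ z a) → ∑ a, z a = 1 →
      f xstar + (1 / α) * ∑ a, xstar a * Real.log (xstar a / y a) ≤
        f z + (1 / α) * ∑ a, z a * Real.log (z a / y a)) :
    ∀ z : A → ℝ, (∀ a, 0 ≤ z a) → ∑ a, z a = 1 →
      f xstar + (1 / α) * ∑ a, xstar a * Real.log (xstar a / y a) ≤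
        f z + (1 / α) * ∑ a, z a * Real.log (z a / y a)
          - (1 / α) * ∑ a, z a * Real.log (z a / xstar a) :=
  pushback_lemma_general A f hf α y hy xstar hxpos hxsum hmin
end

section
/- Let π̂ and π̃ be probability distributions on a finite set A with π̃ strictly positive, and suppose π̂ minimizes π ↦ ⟨π, Q⟩ + (1/α)D(π||π̃) over the simplex, where Q : A → R satisfies ||Q||_∞ ≤ M and α > 0. If π̂ is strictly positive, then ||π̂ - π̃||_1 ≤ α M. -/
open Finset

/-- `(x+1)log x - 2(x-1)` is monotone on `(0,∞)`. -/
lemma phi_mono : MonotoneOn (fun x : ℝ => (x+1) * Real.log x - 2*(x-1)) (Set.Ioi 0) := by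
  apply monotoneOn_of_deriv_nonneg (convex_Ioi 0)
  · apply ContinuousOn.sub
    · exact (continuousOn_id.add continuousOn_const).mul
        (Real.continuousOn_log.mono (by intro x hx; exact ne_of_gt hx))
    · fun_prop
  · rw [interior_Ioi]
    intro x hx
    have hx' : (0:ℝ) < x := hx
    exact (((differentiableAt_id.add_const 1).mul (Real.differentiableAt_log hx'.ne')).sub
      (by fun_prop)).differentiableWithinAt
  · rw [interior_Ioi]
    intro x hx
    have hx' : (0:ℝ) < x := hx
    have hd : HasDerivAt (fun x : ℝ => (x+1) * Real.log x - 2*(x-1))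
        (1 * Real.log x + (x+1) * x⁻¹ - 2*1) x := by
      have h1 : HasDerivAt (fun x : ℝ => x + 1) 1 x := (hasDerivAt_id x).add_const 1
      have h2 : HasDerivAt Real.log x⁻¹ x := Real.hasDerivAt_log hx'.ne'
      have h3 : HasDerivAt (fun x : ℝ => 2*(x-1)) (2*1) x :=
        ((hasDerivAt_id x).sub_const 1).const_mul 2
      exact (h1.mul h2).sub h3
    rw [hd.deriv]
    have hlog : 1 - x⁻¹ ≤ Real.log x := Real.one_sub_inv_le_log_of_pos hx'
    have : (x+1) * x⁻¹ = 1 + x⁻¹ := by field_simp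
    rw [this]
    linarith

lemma key_x (x : ℝ) (hx : 0 < x) : 2*(x-1)^2/(x+1) ≤ (x-1) * Real.log x := by
  have hx1 : (0:ℝ) < x + 1 := by linarith
  rw [div_le_iff₀ hx1]
  rcases le_total 1 x with h | h
  · have := phi_mono (Set.mem_Ioi.2 one_pos) (Set.mem_Ioi.2 hx) h
    simp only [Real.log_one] at this
    nlinarith [this]
  · have := phi_mono (Set.mem_Ioi.2 hx) (Set.mem_Ioi.2 one_pos) h
    simp only [Real.log_one] at this
    nlinarith [this]

lemma key_pq (p q : ℝ) (hp : 0 < p) (hq : 0 < q) :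
    2*(p-q)^2/(p+q) ≤ (p - q) * Real.log (p/q) := by
  have hx : 0 < p / q := div_pos hp hq
  have h := key_x (p/q) hx
  have e1 : (p - q) * Real.log (p/q) = q * ((p/q - 1) * Real.log (p/q)) := by
    field_simp
  have e2 : 2*(p-q)^2/(p+q) = q * (2*(p/q-1)^2/(p/q+1)) := by
    rw [eq_comm, mul_div_assoc']
    rw [div_eq_div_iff (by positivity) (by positivity)]
    field_simp
  rw [e1, e2]
  exact mul_le_mul_of_nonneg_left h hq.le

lemma klpt (p q : ℝ) (hp : 0 < p) (hq : 0 < q) : p - q ≤ p * Real.log (p/q) := by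
  have h := Real.one_sub_inv_le_log_of_pos (div_pos hp hq)
  have : 1 - (p/q)⁻¹ = 1 - q/p := by rw [inv_div]
  rw [this] at h
  have := mul_le_mul_of_nonneg_left h hp.le
  calc p - q = p * (1 - q/p) := by field_simp
    _ ≤ p * Real.log (p/q) := this

lemma klpt_strict (p q : ℝ) (hp : 0 < p) (hq : 0 < q) (hne : p ≠ q) :
    p - q < p * Real.log (p/q) := by
  have hne' : q / p ≠ 1 := by
    intro h; exact hne ((div_eq_one_iff_eq hp.ne').mp h).symm
  have h := Real.log_lt_sub_one_of_pos (div_pos hq hp) hne'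
  have hlog : Real.log (q/p) = - Real.log (p/q) := by
    rw [← Real.log_inv, inv_div]
  rw [hlog] at h
  have h2 : 1 - q/p < Real.log (p/q) := by linarith
  have := mul_lt_mul_of_pos_left h2 hp
  calc p - q = p * (1 - q/p) := by field_simp
    _ < p * Real.log (p/q) := this

theorem mirror_descent_step_l1_bound (A : Type*) [Fintype A] [Nonempty A]
    (Q : A → ℝ) (M α : ℝ) (hM : 0 ≤ M) (hα : 0 < α)
    (hQ : ∀ a, |Q a| ≤ M)
    (πt : A → ℝ) (hπtpos : ∀ a, 0 < πt a) (hπtsum : ∑ a, πt a = 1)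
    (πh : A → ℝ) (hπhpos : ∀ a, 0 < πh a) (hπhsum : ∑ a, πh a = 1)
    (hmin : ∀ p : A → ℝ, (∀ a, 0 ≤ p a) → ∑ a, p a = 1 →
      (∑ a, πh a * Q a) + (1 / α) * ∑ a, πh a * Real.log (πh a / πt a) ≤
        (∑ a, p a * Q a) + (1 / α) * ∑ a, p a * Real.log (p a / πt a)) :
    ∑ a, |πh a - πt a| ≤ α * M := by
  classical
  -- Gibbs distribution
  set Z : ℝ := ∑ a, πt a * Real.exp (-(α * Q a)) with hZdef
  have hZpos : 0 < Z := Finset.sum_pos (fun a _ => mul_pos (hπtpos a) (Real.exp_pos _))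
    Finset.univ_nonempty
  set g : A → ℝ := fun a => πt a * Real.exp (-(α * Q a)) / Z with hgdef
  have hgpos : ∀ a, 0 < g a := fun a => div_pos (mul_pos (hπtpos a) (Real.exp_pos _)) hZpos
  have hgsum : ∑ a, g a = 1 := by
    simp only [hgdef, ← Finset.sum_div]
    exact div_self hZpos.ne'
  have hgratio : ∀ a, Real.log (g a / πt a) = -(α * Q a) - Real.log Z := by
    intro a
    have h1 : g a / πt a = Real.exp (-(α * Q a)) / Z := by
      rw [hgdef]
      field_simp [(hπtpos a).ne', hZpos.ne']
    rw [h1, Real.log_div (Real.exp_pos _).ne' hZpos.ne', Real.log_exp]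
  -- log decomposition for positive prob vectors
  have hid : ∀ p : A → ℝ, (∀ a, 0 < p a) →
      ∑ a, p a * Real.log (p a / πt a) =
        (∑ a, p a * Real.log (p a / g a)) - α * (∑ a, p a * Q a)
          - (∑ a, p a) * Real.log Z := by
    intro p hp
    have key : ∀ a, p a * Real.log (p a / πt a) =
        p a * Real.log (p a / g a) - α * (p a * Q a) - p a * Real.log Z := by
      intro a
      have hsplit : p a / πt a = (p a / g a) * (g a / πt a) := by
        field_simp [(hp a).ne', (hgpos a).ne', (hπtpos a).ne']
      rw [hsplit, Real.log_mul (div_pos (hp a) (hgpos a)).ne'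
        (div_pos (hgpos a) (hπtpos a)).ne', hgratio a]
      ring
    simp only [key, Finset.sum_sub_distrib, ← Finset.mul_sum, ← Finset.sum_mul]
  -- apply hmin at g
  have hmg := hmin g (fun a => (hgpos a).le) hgsum
  have hKg : ∑ a, g a * Real.log (g a / g a) = 0 := by
    apply Finset.sum_eq_zero
    intro a _
    rw [div_self (hgpos a).ne', Real.log_one, mul_zero]
  rw [hid πh hπhpos, hid g hgpos, hπhsum, hgsum, hKg] at hmg
  have hK : ∑ a, πh a * Real.log (πh a / g a) ≤ 0 := by
    have expand : ∀ X Y : ℝ, X + 1/α * ((Y) - α * X - 1 * Real.log Z)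
        = 1/α * Y - 1/α * Real.log Z := by
      intro X Y; field_simp; ring
    rw [expand, expand] at hmg
    have hK' : 1/α * (∑ a, πh a * Real.log (πh a / g a)) ≤ 0 := by linarith
    have hpos : (0:ℝ) < 1/α := by positivity
    by_contra hc
    push_neg at hc
    nlinarith [mul_pos hpos hc]
  -- equality case forces πh = g
  have hpe : ∀ a, πh a = g a := by
    by_contra hne
    push_neg at hne
    obtain ⟨a₀, ha₀⟩ := hne
    have hlt : ∑ a, (πh a - g a) < ∑ a, πh a * Real.log (πh a / g a) := by
      apply Finset.sum_lt_sum
      · intro a _; exact klpt _ _ (hπhpos a) (hgpos a)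
      · exact ⟨a₀, Finset.mem_univ a₀, klpt_strict _ _ (hπhpos a₀) (hgpos a₀) ha₀⟩
    rw [Finset.sum_sub_distrib, hπhsum, hgsum, sub_self] at hlt
    linarith
  -- now the ratio formula for πh
  have hlogπh : ∀ a, Real.log (πh a / πt a) = -(α * Q a) - Real.log Z := by
    intro a; rw [hpe a]; exact hgratio a
  obtain ⟨T, hTdef⟩ : ∃ T : ℝ, T = ∑ a, |πh a - πt a| := ⟨_, rfl⟩
  rw [← hTdef]
  have hT0 : 0 ≤ T := by
    rw [hTdef]; exact Finset.sum_nonneg fun a _ => abs_nonneg _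
  have hdsum : ∑ a, (πh a - πt a) = 0 := by
    rw [Finset.sum_sub_distrib, hπhsum, hπtsum, sub_self]
  -- symmetric KL value
  have hS : ∑ a, (πh a - πt a) * Real.log (πh a / πt a) = -(α * ∑ a, (πh a - πt a) * Q a) := by
    have e : ∀ a, (πh a - πt a) * Real.log (πh a / πt a)
        = -((πh a - πt a) * Q a) * α - Real.log Z * (πh a - πt a) := by
      intro a; rw [hlogπh a]; ring
    simp only [e, Finset.sum_sub_distrib, ← Finset.mul_sum, ← Finset.sum_mul, hdsum,
      mul_zero, sub_zero, Finset.sum_neg_distrib]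
    ring
  -- upper bound
  have hub : ∑ a, (πh a - πt a) * Real.log (πh a / πt a) ≤ α * M * T := by
    rw [hS]
    have h1 : -(∑ a, (πh a - πt a) * Q a) ≤ ∑ a, |πh a - πt a| * M := by
      rw [← Finset.sum_neg_distrib]
      apply Finset.sum_le_sum
      intro a _
      calc -((πh a - πt a) * Q a) ≤ |(πh a - πt a) * Q a| := neg_le_abs _
        _ = |πh a - πt a| * |Q a| := abs_mul _ _
        _ ≤ |πh a - πt a| * M := mul_le_mul_of_nonneg_left (hQ a) (abs_nonneg _)
    calc -(α * ∑ a, (πh a - πt a) * Q a) = α * (-(∑ a, (πh a - πt a) * Q a)) := by ring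
      _ ≤ α * (∑ a, |πh a - πt a| * M) := mul_le_mul_of_nonneg_left h1 hα.le
      _ = α * M * T := by rw [hTdef, ← Finset.sum_mul]; ring
  -- lower bound via pointwise inequality and Cauchy-Schwarz
  have hlb : T^2 ≤ ∑ a, (πh a - πt a) * Real.log (πh a / πt a) := by
    have hcs : T^2 ≤ (∑ a, (πh a - πt a)^2 / (πh a + πt a)) * (∑ a, (πh a + πt a)) := by
      have hCS := Finset.sum_mul_sq_le_sq_mul_sq Finset.univ
        (fun a => |πh a - πt a| / Real.sqrt (πh a + πt a)) (fun a => Real.sqrt (πh a + πt a))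
      have hspos : ∀ a : A, (0:ℝ) < πh a + πt a := by
        intro a; have := hπhpos a; have := hπtpos a; linarith
      have e1 : ∀ a : A, |πh a - πt a| / Real.sqrt (πh a + πt a) * Real.sqrt (πh a + πt a)
          = |πh a - πt a| := fun a =>
        div_mul_cancel₀ _ (Real.sqrt_ne_zero'.mpr (hspos a))
      have e2 : ∀ a : A, (|πh a - πt a| / Real.sqrt (πh a + πt a))^2
          = (πh a - πt a)^2 / (πh a + πt a) := by
        intro a
        rw [div_pow, sq_abs, Real.sq_sqrt (hspos a).le]
      have e3 : ∀ a : A, (Real.sqrt (πh a + πt a))^2 = πh a + πt a := fun a =>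
        Real.sq_sqrt (hspos a).le
      simp only [e1, e2, e3] at hCS
      rw [hTdef]
      exact hCS
    have hsum2 : ∑ a, (πh a + πt a) = 2 := by
      rw [Finset.sum_add_distrib, hπhsum, hπtsum]; norm_num
    rw [hsum2] at hcs
    have hpt : ∑ a, 2 * (πh a - πt a)^2 / (πh a + πt a)
        ≤ ∑ a, (πh a - πt a) * Real.log (πh a / πt a) := by
      apply Finset.sum_le_sum
      intro a _
      have h := key_pq (πh a) (πt a) (hπhpos a) (hπtpos a)
      convert h using 2 <;> ring
    calc T^2 ≤ (∑ a, (πh a - πt a)^2 / (πh a + πt a)) * 2 := hcs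
      _ = ∑ a, 2 * (πh a - πt a)^2 / (πh a + πt a) := by
          rw [Finset.sum_mul]; apply Finset.sum_congr rfl; intro a _; ring
      _ ≤ _ := hpt
  -- conclude
  have hfinal : T^2 ≤ α * M * T := le_trans hlb hub
  rcases eq_or_lt_of_le hT0 with h0 | h0
  · rw [← h0]; positivity
  · nlinarith [hfinal, h0]
end

section
/- Let π̂, π̃, π̂⁺ be probability distributions on a finite set A, with π̃ = (1-θ)π̂ + θu for θ ∈ [0,1] and u uniform. Suppose Q : A → R satisfies ||Q||_∞ ≤ 2H and ||π̂⁺ - π̃||_1 ≤ 2αH·c for constants α > 0, H ≥ 0, c ≥ 1. Then ⟨π̂ - π̂⁺, Q⟩ - (1/α)D(π̂⁺||π̃) ≤ 2αH² + 4Hθ, assuming the KL bound D(π̂⁺||π̃) ≥ (1/2)||π̂⁺ - π̃||_1². -/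
/-!
Split `⟨π̂ - π̂⁺, Q⟩` through `π̃`. The part `⟨π̂ - π̃, Q⟩` costs at most `2H · ‖π̂ - π̃‖₁ ≤ 4Hθ`,
since `π̂ - π̃ = θ (π̂ - u)`. The part `⟨π̃ - π̂⁺, Q⟩` costs at most `2H x` with `x = ‖π̂⁺ - π̃‖₁`,
and Pinsker's inequality makes the KL penalty at least `x² / (2α)`; completing the square,
`2H x - x² / (2α) ≤ 2αH²`.
-/

open Finset

lemma sum_sub_mul_le_sum_abs_sub_mul {A : Type*} [Fintype A] (p q Q : A → ℝ) {M : ℝ}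
    (hQ : ∀ a, |Q a| ≤ M) :
    ∑ a, (p a - q a) * Q a ≤ (∑ a, |p a - q a|) * M := by
  rw [sum_mul]
  refine sum_le_sum fun a _ => ?_
  calc (p a - q a) * Q a ≤ |(p a - q a) * Q a| := le_abs_self _
    _ = |p a - q a| * |Q a| := abs_mul _ _
    _ ≤ |p a - q a| * M := mul_le_mul_of_nonneg_left (hQ a) (abs_nonneg _)

lemma sum_abs_sub_mix_le {A : Type*} [Fintype A] {p u : A → ℝ} {θ : ℝ} (hθ : 0 ≤ θ)
    (hp : ∀ a, 0 ≤ p a) (hp1 : ∑ a, p a = 1) (hu : ∀ a, 0 ≤ u a) (hu1 : ∑ a, u a = 1) :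
    ∑ a, |p a - ((1 - θ) * p a + θ * u a)| ≤ 2 * θ := by
  calc ∑ a, |p a - ((1 - θ) * p a + θ * u a)| = θ * ∑ a, |p a - u a| := by
        rw [mul_sum]
        refine sum_congr rfl fun a _ => ?_
        rw [show p a - ((1 - θ) * p a + θ * u a) = θ * (p a - u a) by ring, abs_mul,
          abs_of_nonneg hθ]
    _ ≤ θ * ∑ a, (p a + u a) := by
        gcongr with a
        exact (abs_sub _ _).trans_eq (by rw [abs_of_nonneg (hp a), abs_of_nonneg (hu a)])
    _ = 2 * θ := by rw [sum_add_distrib, hp1, hu1]; ring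

lemma sum_uniform_eq_one (A : Type*) [Fintype A] [Nonempty A] :
    ∑ _a : A, 1 / (Fintype.card A : ℝ) = 1 := by
  rw [sum_const, card_univ, nsmul_eq_mul, mul_one_div_cancel (by positivity)]

lemma mul_sub_sq_div_le {α : ℝ} (hα : 0 < α) (H x : ℝ) :
    2 * H * x - x ^ 2 / (2 * α) ≤ 2 * α * H ^ 2 := by
  have hsq : 0 ≤ (x - 2 * α * H) ^ 2 / (2 * α) := by positivity
  have hexpand :
      (x - 2 * α * H) ^ 2 / (2 * α) = x ^ 2 / (2 * α) - 2 * H * x + 2 * α * H ^ 2 := by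
    field_simp
    ring
  linarith

theorem policy_update_regret_term_bound_general (A : Type*) [Fintype A] [Nonempty A]
    (πh πt πp : A → ℝ) (θ α H : ℝ)
    (hθ0 : 0 ≤ θ) (hα : 0 < α) (hH : 0 ≤ H)
    (hπhpos : ∀ a, 0 ≤ πh a) (hπhsum : ∑ a, πh a = 1)
    (hmix : ∀ a, πt a = (1 - θ) * πh a + θ * (1 / (Fintype.card A : ℝ)))
    (Q : A → ℝ) (hQ : ∀ a, |Q a| ≤ 2 * H)
    (hpinsker : (1 / 2) * (∑ a, |πp a - πt a|) ^ 2 ≤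
      ∑ a, πp a * Real.log (πp a / πt a)) :
    (∑ a, (πh a - πp a) * Q a)
      - (1 / α) * ∑ a, πp a * Real.log (πp a / πt a) ≤
      2 * α * H ^ 2 + 4 * H * θ := by
  set x := ∑ a, |πp a - πt a|
  have hsplit : ∑ a, (πh a - πp a) * Q a
      = ∑ a, (πh a - πt a) * Q a + ∑ a, (πt a - πp a) * Q a := by
    rw [← sum_add_distrib]
    exact sum_congr rfl fun a _ => by ring
  have hmixing : ∑ a, (πh a - πt a) * Q a ≤ 2 * θ * (2 * H) := by
    refine (sum_sub_mul_le_sum_abs_sub_mul _ _ _ hQ).trans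
      (mul_le_mul_of_nonneg_right ?_ (by positivity))
    simp only [hmix]
    exact sum_abs_sub_mix_le hθ0 hπhpos hπhsum (fun _ => by positivity) (sum_uniform_eq_one A)
  have hdrift : ∑ a, (πt a - πp a) * Q a ≤ x * (2 * H) :=
    (sum_sub_mul_le_sum_abs_sub_mul _ _ _ hQ).trans_eq (by simp only [x, abs_sub_comm])
  have hpenalty : x ^ 2 / (2 * α) ≤ (1 / α) * ∑ a, πp a * Real.log (πp a / πt a) :=
    calc x ^ 2 / (2 * α) = (1 / α) * ((1 / 2) * x ^ 2) := by field_simp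
      _ ≤ _ := mul_le_mul_of_nonneg_left hpinsker (by positivity)
  linarith [mul_sub_sq_div_le hα H x]

theorem policy_update_regret_term_bound (A : Type*) [Fintype A] [Nonempty A]
    (πh πt πp : A → ℝ) (θ α H c : ℝ)
    (hθ0 : 0 ≤ θ) (hθ1 : θ ≤ 1) (hα : 0 < α) (hH : 0 ≤ H) (hc : 1 ≤ c)
    (hπhpos : ∀ a, 0 ≤ πh a) (hπhsum : ∑ a, πh a = 1)
    (hπppos : ∀ a, 0 ≤ πp a) (hπpsum : ∑ a, πp a = 1)
    (hmix : ∀ a, πt a = (1 - θ) * πh a + θ * (1 / (Fintype.card A : ℝ)))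
    (Q : A → ℝ) (hQ : ∀ a, |Q a| ≤ 2 * H)
    (hl1 : ∑ a, |πp a - πt a| ≤ 2 * α * H * c)
    (hpinsker : (1 / 2) * (∑ a, |πp a - πt a|) ^ 2 ≤
      ∑ a, πp a * Real.log (πp a / πt a)) :
    (∑ a, (πh a - πp a) * Q a)
      - (1 / α) * ∑ a, πp a * Real.log (πp a / πt a) ≤
      2 * α * H ^ 2 + 4 * H * θ :=
  policy_update_regret_term_bound_general A πh πt πp θ α H hθ0 hα hH hπhpos hπhsum hmix Q hQ
    hpinsker
end

section
/- Let {φ_t}_{t≥1} be vectors in R^d with ||φ_t||_2 ≤ 1 for all t, and let Λ_0 be a symmetric positive definite matrix with smallest eigenvalue at least 1. Define Λ_t = Λ_0 + Σ_{j=1}^t φ_j φ_jᵀ. Then log(det(Λ_t)/det(Λ_0)) ≤ Σ_{j=1}^t φ_jᵀ Λ_{j-1}^{-1} φ_j ≤ 2 log(det(Λ_t)/det(Λ_0)). -/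
/-!
By the matrix determinant lemma, each rank-one update multiplies the determinant by
`1 + xⱼ` with `xⱼ = φⱼᵀ Λⱼ₋₁⁻¹ φⱼ`, so `log (det Λₜ / det Λ₀) = ∑ log (1 + xⱼ)`.
Since `Λⱼ₋₁ ≥ 1` and `‖φⱼ‖ ≤ 1` we have `0 ≤ xⱼ ≤ 1`, and on `[0, 1]` the scalar
bounds `x / 2 ≤ log (1 + x) ≤ x` give both inequalities term by term.
-/

open Matrix Finset

namespace Real

theorem log_one_add_le_self {x : ℝ} (hx : -1 < x) : log (1 + x) ≤ x := by
  linarith [log_le_sub_one_of_pos (by linarith : 0 < 1 + x)]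

theorem le_two_mul_log_one_add {x : ℝ} (h0 : 0 ≤ x) (h2 : x ≤ 2) : x ≤ 2 * log (1 + x) := by
  have h := le_log_one_add_of_nonneg h0
  rw [div_le_iff₀ (by linarith)] at h
  nlinarith

end Real

namespace Matrix

variable {n : Type*}

theorem posDef_of_posSemidef_sub_one [DecidableEq n] {A : Matrix n n ℝ}
    (hA : (A - 1).PosSemidef) : A.PosDef :=
  add_sub_cancel 1 A ▸ PosDef.one.add_posSemidef hA

variable [Fintype n]

theorem posSemidef_vecMulVec_self (v : n → ℝ) : (vecMulVec v v).PosSemidef := by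
  simpa using posSemidef_vecMulVec_self_star v

variable [DecidableEq n]

theorem det_add_vecMulVec {α : Type*} [CommRing α] {A : Matrix n n α} (hA : IsUnit A.det)
    (u v : n → α) : (A + vecMulVec u v).det = A.det * (1 + v ⬝ᵥ A⁻¹ *ᵥ u) := by
  rw [vecMulVec_eq Unit, det_add_replicateCol_mul_replicateRow hA, Matrix.mul_assoc,
    ← replicateCol_mulVec, det_one_add_mul_comm, det_one_add_replicateCol_mul_replicateRow]

theorem det_eq_det_zero_mul_prod_of_add_vecMulVec {α : Type*} [CommRing α]
    {A : ℕ → Matrix n n α} {u v : ℕ → n → α}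
    (hA : ∀ j, A (j + 1) = A j + vecMulVec (u j) (v j)) (hunit : ∀ j, IsUnit (A j).det)
    (t : ℕ) : (A t).det = (A 0).det * ∏ j ∈ range t, (1 + v j ⬝ᵥ (A j)⁻¹ *ᵥ u j) := by
  induction t with
  | zero => simp
  | succ t ih => rw [hA, det_add_vecMulVec (hunit t), ih, prod_range_succ, mul_assoc]

theorem dotProduct_inv_mulVec_nonneg {A : Matrix n n ℝ} (hA : A.PosSemidef) (v : n → ℝ) :
    0 ≤ v ⬝ᵥ A⁻¹ *ᵥ v := by
  simpa using hA.inv.dotProduct_mulVec_nonneg v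

theorem dotProduct_inv_mulVec_le {A : Matrix n n ℝ} (hA : (A - 1).PosSemidef) (v : n → ℝ) :
    v ⬝ᵥ A⁻¹ *ᵥ v ≤ v ⬝ᵥ v := by
  have hdet : IsUnit A.det :=
    (isUnit_iff_isUnit_det A).mp (posDef_of_posSemidef_sub_one hA).isUnit
  set y := A⁻¹ *ᵥ v
  have hy : (A - 1) *ᵥ y = v - y := by
    rw [sub_mulVec, one_mulVec, mulVec_mulVec, mul_nonsing_inv A hdet, one_mulVec]
  have key : v ⬝ᵥ v - v ⬝ᵥ y = (v - y) ⬝ᵥ (v - y) + y ⬝ᵥ (A - 1) *ᵥ y := by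
    rw [hy]
    simp only [dotProduct_sub, sub_dotProduct, dotProduct_comm y v]
    ring
  have h₁ : 0 ≤ (v - y) ⬝ᵥ (v - y) := by simpa using dotProduct_self_star_nonneg (v - y)
  have h₂ : 0 ≤ y ⬝ᵥ (A - 1) *ᵥ y := by simpa using hA.dotProduct_mulVec_nonneg y
  linarith

end Matrix

theorem elliptical_potential_general (d : ℕ) (φ : ℕ → Fin d → ℝ)
    (hφ : ∀ t, φ t ⬝ᵥ φ t ≤ 1)
    (Λ₀ : Matrix (Fin d) (Fin d) ℝ)
    (hΛ₀min : (Λ₀ - (1 : Matrix (Fin d) (Fin d) ℝ)).PosSemidef)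
    (Λ : ℕ → Matrix (Fin d) (Fin d) ℝ)
    (hΛ : ∀ t, Λ t = Λ₀ + ∑ j ∈ Finset.range t, vecMulVec (φ j) (φ j)) :
    ∀ t : ℕ,
      Real.log ((Λ t).det / Λ₀.det) ≤
        (∑ j ∈ Finset.range t, φ j ⬝ᵥ (Λ j)⁻¹ *ᵥ φ j) ∧
      (∑ j ∈ Finset.range t, φ j ⬝ᵥ (Λ j)⁻¹ *ᵥ φ j) ≤
        2 * Real.log ((Λ t).det / Λ₀.det) := by
  intro t
  have hsub (j : ℕ) : (Λ j - 1).PosSemidef := by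
    rw [hΛ, add_sub_right_comm]
    exact hΛ₀min.add (posSemidef_sum _ fun k _ => posSemidef_vecMulVec_self (φ k))
  have hpos (j : ℕ) : (Λ j).PosDef := posDef_of_posSemidef_sub_one (hsub j)
  have hx₀ (j : ℕ) : 0 ≤ φ j ⬝ᵥ (Λ j)⁻¹ *ᵥ φ j :=
    dotProduct_inv_mulVec_nonneg (hpos j).posSemidef (φ j)
  have hx₁ (j : ℕ) : φ j ⬝ᵥ (Λ j)⁻¹ *ᵥ φ j ≤ 1 :=
    (dotProduct_inv_mulVec_le (hsub j) (φ j)).trans (hφ j)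
  have hstep (j : ℕ) : Λ (j + 1) = Λ j + vecMulVec (φ j) (φ j) := by
    rw [hΛ, hΛ, sum_range_succ, add_assoc]
  have hΛ0 : Λ 0 = Λ₀ := by simp [hΛ]
  have hdet₀ : Λ₀.det ≠ 0 := hΛ0 ▸ (hpos 0).det_pos.ne'
  rw [det_eq_det_zero_mul_prod_of_add_vecMulVec hstep
      (fun j => (isUnit_iff_isUnit_det _).mp (hpos j).isUnit) t,
    hΛ0, mul_div_cancel_left₀ _ hdet₀, Real.log_prod fun j _ => by linarith [hx₀ j], mul_sum]
  exact ⟨sum_le_sum fun j _ => Real.log_one_add_le_self (by linarith [hx₀ j]),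
    sum_le_sum fun j _ => Real.le_two_mul_log_one_add (hx₀ j) (by linarith [hx₁ j])⟩

theorem elliptical_potential (d : ℕ) (φ : ℕ → Fin d → ℝ)
    (hφ : ∀ t, φ t ⬝ᵥ φ t ≤ 1)
    (Λ₀ : Matrix (Fin d) (Fin d) ℝ) (hΛ₀ : Λ₀.PosDef)
    (hΛ₀min : (Λ₀ - (1 : Matrix (Fin d) (Fin d) ℝ)).PosSemidef)
    (Λ : ℕ → Matrix (Fin d) (Fin d) ℝ)
    (hΛ : ∀ t, Λ t = Λ₀ + ∑ j ∈ Finset.range t, vecMulVec (φ j) (φ j)) :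
    ∀ t : ℕ,
      Real.log ((Λ t).det / Λ₀.det) ≤
        (∑ j ∈ Finset.range t, φ j ⬝ᵥ (Λ j)⁻¹ *ᵥ φ j) ∧
      (∑ j ∈ Finset.range t, φ j ⬝ᵥ (Λ j)⁻¹ *ᵥ φ j) ≤
        2 * Real.log ((Λ t).det / Λ₀.det) :=
  elliptical_potential_general d φ hφ Λ₀ hΛ₀min Λ hΛ
end

section
/- Let Q̂₁ and Q̂₂ be functions of the form Q̂ᵢ(s,a) = (φ(s,a)ᵀwᵢ - βᵢ||φ(s,a)||_{Λᵢ}) · σ(-β_w||φ(s,a)||_{Λᵢ} + log K), where ||φ(s,a)||_2 ≤ 1 for all (s,a), |βᵢ| ≤ C_β, ||wᵢ||_2 ≤ C_w, (2K)^{-1}I ⪯ Λᵢ ⪯ I, with constants 1 ≤ β_w, C_w, C_β and K ≥ 1. Then sup_{(s,a)} |Q̂₁(s,a) - Q̂₂(s,a)| ≤ 4√K · β_w · max{C_w, C_β} · √(|β₁-β₂|² + ||w₁-w₂||₂² + ||Λ₁-Λ₂||_F²). -/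
/-! For `‖x‖ ≤ 1` and `Λᵢ ⪰ t • 1`, `|‖x‖_{Λ₁} - ‖x‖_{Λ₂}| ≤ ‖Λ₁ - Λ₂‖_F / (2√t)`: the quadratic
forms differ by at most `‖Λ₁ - Λ₂‖_F ‖x‖²`, and the square roots of two numbers `≥ t ‖x‖²` differ
by at most their difference over `2√(t ‖x‖²)`. The sigmoid is `1/4`-Lipschitz, so its argument
`-β_w ‖φ‖_Λ + log K` contributes a factor `β_w / 4`. Writing
`g₁σ₁ - g₂σ₂ = (g₁ - g₂)σ₁ + g₂(σ₁ - σ₂)` with `|σ₁| ≤ 1` and `|g₂| ≤ C_w + C_β` leaves a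
linear combination of `‖w₁ - w₂‖`, `|β₁ - β₂|` and `‖Λ₁ - Λ₂‖_F`, each at most the joint norm. -/

open Matrix Real

theorem Real.lipschitzWith_sigmoid : LipschitzWith 4⁻¹ sigmoid := by
  refine lipschitzWith_of_nnnorm_deriv_le differentiable_sigmoid fun x => ?_
  rw [deriv_sigmoid, ← NNReal.coe_le_coe, coe_nnnorm, Real.norm_eq_abs,
    abs_of_nonneg (mul_nonneg (sigmoid_nonneg x) (sub_nonneg.2 (sigmoid_le_one x)))]
  push_cast
  nlinarith [sq_nonneg (sigmoid x - 2⁻¹)]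

theorem Real.abs_sigmoid_sub_sigmoid_le (a b : ℝ) : |sigmoid a - sigmoid b| ≤ |a - b| / 4 := by
  simpa [Real.dist_eq, div_eq_inv_mul] using lipschitzWith_sigmoid.dist_le_mul a b

theorem Real.abs_sqrt_sub_sqrt_le {a x y : ℝ} (ha : 0 < a) (hx : a ≤ x) (hy : a ≤ y) :
    |√x - √y| ≤ |x - y| / (2 * √a) := by
  have hsum : 2 * √a ≤ √x + √y := by
    linarith [sqrt_le_sqrt hx, sqrt_le_sqrt hy]
  have hfactor : |√x - √y| * (√x + √y) = |x - y| := by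
    rw [← abs_of_nonneg (by positivity : 0 ≤ √x + √y), ← abs_mul]
    congr 1
    linear_combination mul_self_sqrt (ha.le.trans hx) - mul_self_sqrt (ha.le.trans hy)
  rw [le_div_iff₀ (by positivity), ← hfactor]
  gcongr

theorem abs_mul_sub_mul_le_of_abs_le_one {a b u v : ℝ} (hu : |u| ≤ 1) :
    |a * u - b * v| ≤ |a - b| + |b| * |u - v| :=
  calc |a * u - b * v| = |(a - b) * u + b * (u - v)| := by ring_nf
    _ ≤ |a - b| * |u| + |b| * |u - v| := by
      rw [← abs_mul, ← abs_mul]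
      exact abs_add_le _ _
    _ ≤ |a - b| + |b| * |u - v| := by
      gcongr
      exact mul_le_of_le_one_right (abs_nonneg _) hu

namespace Matrix

variable {n : Type*} [Fintype n]

theorem dotProduct_self_eq_sum_sq (x : n → ℝ) : x ⬝ᵥ x = ∑ i, x i ^ 2 := by
  simp only [dotProduct, sq]

theorem abs_dotProduct_le_sqrt_mul_sqrt (x y : n → ℝ) :
    |x ⬝ᵥ y| ≤ √(∑ i, x i ^ 2) * √(∑ i, y i ^ 2) := by
  rw [← sqrt_mul (by positivity), ← sqrt_sq_eq_abs]
  exact sqrt_le_sqrt (Finset.sum_mul_sq_le_sq_mul_sq _ _ _)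

theorem abs_dotProduct_le_of_sum_sq_le_one {x : n → ℝ} (hx : ∑ i, x i ^ 2 ≤ 1) (y : n → ℝ) :
    |x ⬝ᵥ y| ≤ √(∑ i, y i ^ 2) :=
  (abs_dotProduct_le_sqrt_mul_sqrt x y).trans
    (mul_le_of_le_one_left (sqrt_nonneg _) (sqrt_le_one.2 hx))

theorem abs_dotProduct_mulVec_le (M : Matrix n n ℝ) (x : n → ℝ) :
    |x ⬝ᵥ M *ᵥ x| ≤ √(∑ i, ∑ j, M i j ^ 2) * ∑ i, x i ^ 2 := by
  have hquad : x ⬝ᵥ M *ᵥ x = (fun p : n × n => M p.1 p.2) ⬝ᵥ fun p => x p.1 * x p.2 := by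
    simp only [dotProduct, mulVec, Fintype.sum_prod_type, Finset.mul_sum]
    exact Finset.sum_congr rfl fun i _ => Finset.sum_congr rfl fun j _ => by ring
  have hsq : ∑ p : n × n, (x p.1 * x p.2) ^ 2 = (∑ i, x i ^ 2) ^ 2 := by
    simp only [Fintype.sum_prod_type, sq (∑ i, x i ^ 2), Finset.sum_mul_sum, mul_pow]
  calc |x ⬝ᵥ M *ᵥ x|
      ≤ √(∑ p : n × n, M p.1 p.2 ^ 2) * √(∑ p : n × n, (x p.1 * x p.2) ^ 2) :=
        hquad ▸ abs_dotProduct_le_sqrt_mul_sqrt _ _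
    _ = √(∑ i, ∑ j, M i j ^ 2) * ∑ i, x i ^ 2 := by
        rw [hsq, sqrt_sq (by positivity), Fintype.sum_prod_type]

theorem dotProduct_mulVec_le_of_posSemidef_sub {A B : Matrix n n ℝ} (h : (B - A).PosSemidef)
    (x : n → ℝ) : x ⬝ᵥ A *ᵥ x ≤ x ⬝ᵥ B *ᵥ x := by
  simpa [sub_mulVec, dotProduct_sub] using h.dotProduct_mulVec_nonneg x

theorem abs_sqrt_dotProduct_mulVec_le_one [DecidableEq n] {Λ : Matrix n n ℝ}
    (h : (1 - Λ).PosSemidef) {x : n → ℝ} (hx : ∑ i, x i ^ 2 ≤ 1) : |√(x ⬝ᵥ Λ *ᵥ x)| ≤ 1 := by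
  rw [abs_of_nonneg (sqrt_nonneg _), sqrt_le_one]
  refine (dotProduct_mulVec_le_of_posSemidef_sub h x).trans ?_
  rwa [one_mulVec, dotProduct_self_eq_sum_sq]

theorem abs_sqrt_dotProduct_mulVec_sub_le [DecidableEq n] {t : ℝ} (ht : 0 < t)
    {Λ₁ Λ₂ : Matrix n n ℝ} (h₁ : (Λ₁ - t • 1).PosSemidef) (h₂ : (Λ₂ - t • 1).PosSemidef)
    {x : n → ℝ} (hx : ∑ i, x i ^ 2 ≤ 1) :
    |√(x ⬝ᵥ Λ₁ *ᵥ x) - √(x ⬝ᵥ Λ₂ *ᵥ x)| ≤ √(∑ i, ∑ j, (Λ₁ i j - Λ₂ i j) ^ 2) / (2 * √t) := by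
  set c := ∑ i, x i ^ 2
  set F := √(∑ i, ∑ j, (Λ₁ i j - Λ₂ i j) ^ 2)
  have hlow {Λ : Matrix n n ℝ} (h : (Λ - t • 1).PosSemidef) : t * c ≤ x ⬝ᵥ Λ *ᵥ x := by
    simpa [smul_mulVec, one_mulVec, dotProduct_self_eq_sum_sq] using
      dotProduct_mulVec_le_of_posSemidef_sub h x
  have hdiff : |x ⬝ᵥ Λ₁ *ᵥ x - x ⬝ᵥ Λ₂ *ᵥ x| ≤ F * c := by
    simpa [sub_mulVec, dotProduct_sub] using abs_dotProduct_mulVec_le (Λ₁ - Λ₂) x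
  obtain hc | hc := (show 0 ≤ c by positivity).eq_or_lt
  · rw [← hc, mul_zero, abs_nonpos_iff, sub_eq_zero] at hdiff
    rw [hdiff, sub_self, abs_zero]
    positivity
  calc |√(x ⬝ᵥ Λ₁ *ᵥ x) - √(x ⬝ᵥ Λ₂ *ᵥ x)|
      ≤ |x ⬝ᵥ Λ₁ *ᵥ x - x ⬝ᵥ Λ₂ *ᵥ x| / (2 * √(t * c)) :=
        abs_sqrt_sub_sqrt_le (by positivity) (hlow h₁) (hlow h₂)
    _ ≤ F * c / (2 * √(t * c)) := by gcongr
    _ = F * √c / (2 * √t) := by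
        rw [sqrt_mul ht.le]
        field_simp
        rw [sq_sqrt hc.le]
    _ ≤ F / (2 * √t) := by
        gcongr
        exact mul_le_of_le_one_right (sqrt_nonneg _) (sqrt_le_one.2 hx)

end Matrix

theorem abs_sub_mul_sigmoid_sub_le {p₁ p₂ β₁ β₂ n₁ n₂ βw L Cw Cβ : ℝ} (hp₂ : |p₂| ≤ Cw)
    (hβ₂ : |β₂| ≤ Cβ) (hn₁ : |n₁| ≤ 1) (hn₂ : |n₂| ≤ 1) (hβw : 0 ≤ βw) :
    |(p₁ - β₁ * n₁) * sigmoid (-βw * n₁ + L) - (p₂ - β₂ * n₂) * sigmoid (-βw * n₂ + L)| ≤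
      |p₁ - p₂| + |β₁ - β₂| + (Cβ + (Cw + Cβ) * βw / 4) * |n₁ - n₂| := by
  have hσ : |sigmoid (-βw * n₁ + L) - sigmoid (-βw * n₂ + L)| ≤ βw * |n₁ - n₂| / 4 := by
    refine (abs_sigmoid_sub_sigmoid_le _ _).trans_eq ?_
    rw [show -βw * n₁ + L - (-βw * n₂ + L) = -(βw * (n₁ - n₂)) by ring, abs_neg, abs_mul,
      abs_of_nonneg hβw]
  have hg₂ : |p₂ - β₂ * n₂| ≤ Cw + Cβ :=
    calc |p₂ - β₂ * n₂| ≤ |p₂| + |β₂| * |n₂| := abs_mul β₂ n₂ ▸ abs_sub _ _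
      _ ≤ Cw + Cβ * 1 := by gcongr; exact (abs_nonneg _).trans hβ₂
      _ = Cw + Cβ := by rw [mul_one]
  have hg : |(p₁ - β₁ * n₁) - (p₂ - β₂ * n₂)| ≤ |p₁ - p₂| + |β₁ - β₂| + Cβ * |n₁ - n₂| :=
    calc |(p₁ - β₁ * n₁) - (p₂ - β₂ * n₂)| = |(p₁ - p₂) - (β₁ - β₂) * n₁ - β₂ * (n₁ - n₂)| := by
          ring_nf
      _ ≤ |p₁ - p₂| + |β₁ - β₂| * |n₁| + |β₂| * |n₁ - n₂| := by
          rw [← abs_mul, ← abs_mul]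
          exact (abs_sub _ _).trans (add_le_add_left (abs_sub _ _) _)
      _ ≤ |p₁ - p₂| + |β₁ - β₂| * 1 + Cβ * |n₁ - n₂| := by gcongr
      _ = |p₁ - p₂| + |β₁ - β₂| + Cβ * |n₁ - n₂| := by rw [mul_one]
  have hσ₁ : |sigmoid (-βw * n₁ + L)| ≤ 1 := by
    rw [abs_of_nonneg (sigmoid_nonneg _)]
    exact sigmoid_le_one _
  calc _ ≤ |(p₁ - β₁ * n₁) - (p₂ - β₂ * n₂)| + |p₂ - β₂ * n₂| *
          |sigmoid (-βw * n₁ + L) - sigmoid (-βw * n₂ + L)| :=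
        abs_mul_sub_mul_le_of_abs_le_one hσ₁
    _ ≤ (|p₁ - p₂| + |β₁ - β₂| + Cβ * |n₁ - n₂|) + (Cw + Cβ) * (βw * |n₁ - n₂| / 4) := by
        gcongr
        exact (abs_nonneg _).trans hg₂
    _ = |p₁ - p₂| + |β₁ - β₂| + (Cβ + (Cw + Cβ) * βw / 4) * |n₁ - n₂| := by ring

theorem div_two_sqrt_inv_two_mul_le {K F : ℝ} (hK : 0 < K) (hF : 0 ≤ F) :
    F / (2 * √((2 * K)⁻¹)) ≤ √K * F := by
  have hprod : √((2 * K)⁻¹) * √K = √(1 / 2) := by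
    rw [← sqrt_mul (by positivity)]
    field_simp
  have hhalf : 1 / 2 ≤ √(1 / 2) := le_sqrt_of_sq_le (by norm_num)
  rw [div_le_iff₀ (by positivity)]
  nlinarith

theorem add_add_mul_le {s βw M D : ℝ} (hs : 1 ≤ s) (hβw : 1 ≤ βw) (hM : 1 ≤ M) (hD : 0 ≤ D) :
    D + D + (M + 2 * M * βw / 4) * (s * D) ≤ 4 * s * βw * M * D := by
  have hX : 1 ≤ s * βw * M :=
    one_le_mul_of_one_le_of_one_le (one_le_mul_of_one_le_of_one_le hs hβw) hM
  have hMsD : 0 ≤ M * s * D := by positivity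
  nlinarith [mul_le_mul_of_nonneg_right hX hD, mul_nonneg (sub_nonneg.2 hβw) hMsD]

theorem lipschitz_Q_estimate_general (d : ℕ) (S A : Type*)
    (φ : S → A → Fin d → ℝ) (hφ : ∀ s a, φ s a ⬝ᵥ φ s a ≤ 1)
    (K βw Cw Cβ : ℝ) (hK : 1 ≤ K) (hβw : 1 ≤ βw) (hCβ : 1 ≤ Cβ)
    (β₁ β₂ : ℝ) (hβ₂ : |β₂| ≤ Cβ)
    (w₁ w₂ : Fin d → ℝ)
    (hw₂ : Real.sqrt (w₂ ⬝ᵥ w₂) ≤ Cw)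
    (Λ₁ Λ₂ : Matrix (Fin d) (Fin d) ℝ)
    (hΛ₁lo : (Λ₁ - (2 * K)⁻¹ • (1 : Matrix (Fin d) (Fin d) ℝ)).PosSemidef)
    (hΛ₁hi : ((1 : Matrix (Fin d) (Fin d) ℝ) - Λ₁).PosSemidef)
    (hΛ₂lo : (Λ₂ - (2 * K)⁻¹ • (1 : Matrix (Fin d) (Fin d) ℝ)).PosSemidef)
    (hΛ₂hi : ((1 : Matrix (Fin d) (Fin d) ℝ) - Λ₂).PosSemidef) :
    ∀ s a,
      |(φ s a ⬝ᵥ w₁ - β₁ * Real.sqrt (φ s a ⬝ᵥ Λ₁ *ᵥ φ s a)) *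
          (1 / (1 + Real.exp (-(-βw * Real.sqrt (φ s a ⬝ᵥ Λ₁ *ᵥ φ s a) + Real.log K))))
        - (φ s a ⬝ᵥ w₂ - β₂ * Real.sqrt (φ s a ⬝ᵥ Λ₂ *ᵥ φ s a)) *
          (1 / (1 + Real.exp (-(-βw * Real.sqrt (φ s a ⬝ᵥ Λ₂ *ᵥ φ s a) + Real.log K))))| ≤
      4 * Real.sqrt K * βw * max Cw Cβ *
        Real.sqrt (|β₁ - β₂| ^ 2 + (∑ i, (w₁ i - w₂ i) ^ 2) +
          (∑ i, ∑ j, (Λ₁ i j - Λ₂ i j) ^ 2)) := by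
  intro s a
  set x := φ s a
  set D := √(|β₁ - β₂| ^ 2 + (∑ i, (w₁ i - w₂ i) ^ 2) + (∑ i, ∑ j, (Λ₁ i j - Λ₂ i j) ^ 2))
  have hβD : |β₁ - β₂| ≤ D :=
    le_sqrt_of_sq_le <|
      le_add_of_le_of_nonneg (le_add_of_nonneg_right (by positivity)) (by positivity)
  have hwD : √(∑ i, (w₁ i - w₂ i) ^ 2) ≤ D :=
    sqrt_le_sqrt <| le_add_of_le_of_nonneg (le_add_of_nonneg_left (by positivity)) (by positivity)
  have hΛD : √(∑ i, ∑ j, (Λ₁ i j - Λ₂ i j) ^ 2) ≤ D :=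
    sqrt_le_sqrt <| le_add_of_nonneg_left (by positivity)
  have hx : ∑ i, x i ^ 2 ≤ 1 := dotProduct_self_eq_sum_sq x ▸ hφ s a
  have hp₂ : |x ⬝ᵥ w₂| ≤ Cw :=
    (abs_dotProduct_le_of_sum_sq_le_one hx w₂).trans (dotProduct_self_eq_sum_sq w₂ ▸ hw₂)
  have hΔp : |x ⬝ᵥ w₁ - x ⬝ᵥ w₂| ≤ D :=
    (dotProduct_sub x w₁ w₂ ▸ abs_dotProduct_le_of_sum_sq_le_one hx (w₁ - w₂)).trans hwD
  have hΔn : |√(x ⬝ᵥ Λ₁ *ᵥ x) - √(x ⬝ᵥ Λ₂ *ᵥ x)| ≤ √K * D :=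
    (abs_sqrt_dotProduct_mulVec_sub_le (by positivity) hΛ₁lo hΛ₂lo hx).trans <|
      (div_two_sqrt_inv_two_mul_le (by positivity) (sqrt_nonneg _)).trans (by gcongr)
  have hCβM : Cβ ≤ max Cw Cβ := le_max_right _ _
  have hCwβM : Cw + Cβ ≤ 2 * max Cw Cβ := by linarith [le_max_left Cw Cβ]
  simp only [one_div, ← sigmoid_def]
  calc _ ≤ |x ⬝ᵥ w₁ - x ⬝ᵥ w₂| + |β₁ - β₂| + (Cβ + (Cw + Cβ) * βw / 4) *
          |√(x ⬝ᵥ Λ₁ *ᵥ x) - √(x ⬝ᵥ Λ₂ *ᵥ x)| :=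
        abs_sub_mul_sigmoid_sub_le hp₂ hβ₂ (abs_sqrt_dotProduct_mulVec_le_one hΛ₁hi hx)
          (abs_sqrt_dotProduct_mulVec_le_one hΛ₂hi hx) (by positivity)
    _ ≤ D + D + (max Cw Cβ + 2 * max Cw Cβ * βw / 4) * (√K * D) := by gcongr
    _ ≤ 4 * √K * βw * max Cw Cβ * D :=
        add_add_mul_le (one_le_sqrt.2 hK) hβw (hCβ.trans hCβM) (sqrt_nonneg _)

theorem lipschitz_Q_estimate (d : ℕ) (S A : Type*)
    (φ : S → A → Fin d → ℝ) (hφ : ∀ s a, φ s a ⬝ᵥ φ s a ≤ 1)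
    (K βw Cw Cβ : ℝ) (hK : 1 ≤ K) (hβw : 1 ≤ βw) (hCw : 1 ≤ Cw) (hCβ : 1 ≤ Cβ)
    (β₁ β₂ : ℝ) (hβ₁ : |β₁| ≤ Cβ) (hβ₂ : |β₂| ≤ Cβ)
    (w₁ w₂ : Fin d → ℝ)
    (hw₁ : Real.sqrt (w₁ ⬝ᵥ w₁) ≤ Cw) (hw₂ : Real.sqrt (w₂ ⬝ᵥ w₂) ≤ Cw)
    (Λ₁ Λ₂ : Matrix (Fin d) (Fin d) ℝ)
    (hΛ₁lo : (Λ₁ - (2 * K)⁻¹ • (1 : Matrix (Fin d) (Fin d) ℝ)).PosSemidef)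
    (hΛ₁hi : ((1 : Matrix (Fin d) (Fin d) ℝ) - Λ₁).PosSemidef)
    (hΛ₂lo : (Λ₂ - (2 * K)⁻¹ • (1 : Matrix (Fin d) (Fin d) ℝ)).PosSemidef)
    (hΛ₂hi : ((1 : Matrix (Fin d) (Fin d) ℝ) - Λ₂).PosSemidef) :
    ∀ s a,
      |(φ s a ⬝ᵥ w₁ - β₁ * Real.sqrt (φ s a ⬝ᵥ Λ₁ *ᵥ φ s a)) *
          (1 / (1 + Real.exp (-(-βw * Real.sqrt (φ s a ⬝ᵥ Λ₁ *ᵥ φ s a) + Real.log K))))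
        - (φ s a ⬝ᵥ w₂ - β₂ * Real.sqrt (φ s a ⬝ᵥ Λ₂ *ᵥ φ s a)) *
          (1 / (1 + Real.exp (-(-βw * Real.sqrt (φ s a ⬝ᵥ Λ₂ *ᵥ φ s a) + Real.log K))))| ≤
      4 * Real.sqrt K * βw * max Cw Cβ *
        Real.sqrt (|β₁ - β₂| ^ 2 + (∑ i, (w₁ i - w₂ i) ^ 2) +
          (∑ i, ∑ j, (Λ₁ i j - Λ₂ i j) ^ 2)) :=
  lipschitz_Q_estimate_general d S A φ hφ K βw Cw Cβ hK hβw hCβ β₁ β₂ hβ₂ w₁ w₂ hw₂ Λ₁ Λ₂ hΛ₁lo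
    hΛ₁hi hΛ₂lo hΛ₂hi
end
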